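/- The class of languages generated by admissible signed grammars is closed under concatenation of languages over disjoint alphabets: if L₁ ⊆ Σ₁* and L₂ ⊆ Σ₂* are generated by admissible signed grammars over Σ₁ and Σ₂ respectively, and Σ₁ ∩ Σ₂ = ∅, then the concatenation L₁L₂ = { uv : u ∈ L₁, v ∈ L₂ } is generated by an admissible signed grammar over Σ₁ ∪ Σ₂. -/

import Mathlib

/-- A parse-tree node: either a terminal leaf or an internal node labeled by a
nonterminal with a list of children. -/
inductive PTree (N : Type) (T : Type) : Type where
  | leaf (t : T) : PTree N T
  | node (A : N) (children : List (PTree N T)) : PTree N T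

namespace PTree

variable {N T : Type}

/-- The symbol (nonterminal or terminal) labeling the root of a tree. -/
def toSymbol : PTree N T → N ⊕ T
  | leaf t => Sum.inr t
  | node A _ => Sum.inl A

/-- The yield of a parse tree: the word spelled by its leaves. -/
def yield : PTree N T → List T
  | leaf t => [t]
  | node _ cs => cs.attach.flatMap (fun c => yield c.1)
decreasing_by simp only [PTree.node.sizeOf_spec]; have h := List.sizeOf_lt_of_mem c.2; omega

/-- The sign of a parse tree w.r.t. a sign assignment on productions:
the product of the signs of the productions used at its nodes. -/
def sign (σ : N × List (N ⊕ T) → ℤ) : PTree N T → ℤ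
  | leaf _ => 1
  | node A cs => σ (A, cs.map toSymbol) * (cs.attach.map (fun c => sign σ c.1)).prod
decreasing_by simp only [PTree.node.sizeOf_spec]; have h := List.sizeOf_lt_of_mem c.2; omega

/-- Validity of a parse tree w.r.t. a set of productions: at every internal node,
the node label together with the list of symbols of its children is a production. -/
inductive Valid (R : Set (N × List (N ⊕ T))) : PTree N T → Prop where
  | leaf (t : T) : Valid R (PTree.leaf t)
  | node (A : N) (cs : List (PTree N T)) :
      (A, cs.map toSymbol) ∈ R → (∀ c ∈ cs, Valid R c) → Valid R (PTree.node A cs)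

end PTree

/-- A signed grammar over a (finite) terminal alphabet `T`: a context-free grammar
with finitely many nonterminals and productions, together with a sign `1` or `-1`
attached to each production. -/
structure SignedGrammar (T : Type) : Type 1 where
  /-- the type of nonterminals -/
  N : Type
  finN : Finite N
  /-- the start symbol -/
  start : N
  /-- the productions `A → α`, `α ∈ (N ∪ T)*` -/
  rules : Set (N × List (N ⊕ T))
  finRules : rules.Finite
  /-- the sign of each production -/
  sign : N × List (N ⊕ T) → ℤ
  sign_valid : ∀ r ∈ rules, sign r = 1 ∨ sign r = -1

namespace SignedGrammar

variable {T : Type}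

/-- A parse tree over the grammar: a valid tree whose root is labeled by the start symbol. -/
def IsParseTree (G : SignedGrammar T) (t : PTree G.N T) : Prop :=
  PTree.Valid G.rules t ∧ t.toSymbol = Sum.inl G.start

/-- The set of parse trees over `G` with yield `w`. -/
def parseTreesOf (G : SignedGrammar T) (w : List T) : Set (PTree G.N T) :=
  {t | G.IsParseTree t ∧ t.yield = w}

/-- `G` is admissible if every word has only finitely many parse trees. -/
def Admissible (G : SignedGrammar T) : Prop :=
  ∀ w : List T, (G.parseTreesOf w).Finite

/-- `n_w(G)`: the sum of the signs of all parse trees over `G` with yield `w`. -/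
noncomputable def count (G : SignedGrammar T) (w : List T) : ℤ :=
  ∑ᶠ t ∈ G.parseTreesOf w, t.sign G.sign

/-- `G` generates the language `L` if `G` is admissible, `n_w(G) = 1` for every
`w ∈ L` and `n_w(G) = 0` for every `w ∉ L`. -/
def Generates (G : SignedGrammar T) (L : Language T) : Prop :=
  G.Admissible ∧ (∀ w ∈ L, G.count w = 1) ∧ (∀ w ∉ L, G.count w = 0)

/-- An ordinary context-free grammar: every production has sign `+1`. -/
def Ordinary (G : SignedGrammar T) : Prop :=
  ∀ r ∈ G.rules, G.sign r = 1

/-- The language generated by `G` in the usual sense: all yields of parse trees. -/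
def language (G : SignedGrammar T) : Language T :=
  {w | ∃ t : PTree G.N T, G.IsParseTree t ∧ t.yield = w}

/-- `G` is unambiguous if every word has at most one parse tree. -/
def Unambiguous (G : SignedGrammar T) : Prop :=
  ∀ t₁ t₂ : PTree G.N T, G.IsParseTree t₁ → G.IsParseTree t₂ →
    t₁.yield = t₂.yield → t₁ = t₂

/-- The number of parse trees of `G` with yield `w` (degree of ambiguity of `w`). -/
noncomputable def ambCount (G : SignedGrammar T) (w : List T) : ℕ :=
  Nat.card {t : PTree G.N T // t ∈ G.parseTreesOf w}

end SignedGrammar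

/-!
Take disjoint copies of `G₁` and `G₂` and add a fresh start symbol `none` with the single
production `none → S₁ S₂` of sign `1`. Every parse tree of the new grammar is this production on
top of a parse tree of `G₁` and one of `G₂`, so its yield is `uv` with `u ∈ Σ₁*`, `v ∈ Σ₂*`; as
the alphabets are disjoint this splitting of a word is unique. Hence the parse trees of `uv`
are in sign-multiplying bijection with pairs of parse trees of `u` and `v`, so
`n_{uv} = n_u(G₁) n_v(G₂)`, while words of any other shape have no parse tree at all.
-/

theorem finsum_mem_mul_finsum_mem {α β R : Type*} [NonUnitalNonAssocSemiring R] {s : Set α}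
    {t : Set β} (hs : s.Finite) (ht : t.Finite) (f : α → R) (g : β → R) :
    (∑ᶠ a ∈ s, f a) * ∑ᶠ b ∈ t, g b = ∑ᶠ p ∈ s ×ˢ t, f p.1 * g p.2 := by
  rw [finsum_mem_eq_finite_toFinset_sum _ hs, finsum_mem_eq_finite_toFinset_sum _ ht,
    finsum_mem_eq_finite_toFinset_sum _ (hs.prod ht), ← Set.Finite.toFinset_prod,
    Finset.sum_mul_sum, Finset.sum_product]

theorem List.map_inl_append_map_inr_inj {α β : Type*} {u u' : List α} {v v' : List β} :
    u.map Sum.inl ++ v.map Sum.inr = u'.map Sum.inl ++ v'.map Sum.inr ↔ u = u' ∧ v = v' := by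
  refine ⟨fun h => ⟨?_, ?_⟩, fun h => by rw [h.1, h.2]⟩
  · simpa [List.filterMap_append, List.filterMap_map, Function.comp_def]
      using congrArg (List.filterMap Sum.getLeft?) h
  · simpa [List.filterMap_append, List.filterMap_map, Function.comp_def]
      using congrArg (List.filterMap Sum.getRight?) h

theorem List.exists_map_eq_of_forall_mem {α β : Type*} {F : α → β} {P : α → Prop} :
    ∀ {l : List β}, (∀ b ∈ l, ∃ a, P a ∧ F a = b) → ∃ l' : List α, (∀ a ∈ l', P a) ∧ l'.map F = l
  | [], _ => ⟨[], by simp⟩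
  | b :: l, h => by
    obtain ⟨a, ha, rfl⟩ := h b mem_cons_self
    obtain ⟨l', hl', rfl⟩ := exists_map_eq_of_forall_mem fun b hb => h b (mem_cons_of_mem _ hb)
    exact ⟨a :: l', forall_mem_cons.2 ⟨ha, hl'⟩, rfl⟩

theorem List.eq_of_map_eq_map {α β : Type*} {F : α → β} :
    ∀ {l l' : List α}, (∀ x ∈ l, ∀ y, F x = F y → x = y) → l.map F = l'.map F → l = l'
  | [], [], _, _ => rfl
  | a :: l, b :: l', hF, e => by
    simp only [map_cons, cons.injEq] at e
    rw [hF a mem_cons_self b e.1, eq_of_map_eq_map (fun x hx => hF x (mem_cons_of_mem a hx)) e.2]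

namespace PTree

variable {N T N' T' : Type}

@[induction_eliminator]
theorem induction {motive : PTree N T → Prop} (leaf : ∀ t, motive (leaf t))
    (node : ∀ A cs, (∀ c ∈ cs, motive c) → motive (node A cs)) : ∀ t, motive t
  | .leaf t => leaf t
  | .node A cs => node A cs fun c _ => induction leaf node c

@[simp]
theorem yield_leaf (t : T) : (leaf t : PTree N T).yield = [t] := by
  rw [yield]

@[simp]
theorem yield_node (A : N) (cs : List (PTree N T)) : (node A cs).yield = cs.flatMap yield := by
  rw [yield]; simp

@[simp]
theorem sign_leaf (σ : N × List (N ⊕ T) → ℤ) (t : T) : (leaf t).sign σ = 1 := by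
  rw [sign]

@[simp]
theorem sign_node (σ : N × List (N ⊕ T) → ℤ) (A : N) (cs : List (PTree N T)) :
    (node A cs).sign σ = σ (A, cs.map toSymbol) * (cs.map (sign σ)).prod := by
  rw [sign]; simp

def map (f : N → N') (g : T → T') : PTree N T → PTree N' T'
  | leaf t => leaf (g t)
  | node A cs => node (f A) (cs.map fun c => map f g c)

@[simp]
theorem map_leaf (f : N → N') (g : T → T') (t : T) : map f g (leaf t) = leaf (g t) := by
  rw [map]

@[simp]
theorem map_node (f : N → N') (g : T → T') (A : N) (cs : List (PTree N T)) :
    map f g (node A cs) = node (f A) (cs.map (map f g)) := by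
  rw [map]

@[simp]
theorem toSymbol_map (f : N → N') (g : T → T') (t : PTree N T) :
    (map f g t).toSymbol = Sum.map f g t.toSymbol := by
  cases t <;> simp [toSymbol]

theorem map_toSymbol_map (f : N → N') (g : T → T') (cs : List (PTree N T)) :
    (cs.map (map f g)).map toSymbol = (cs.map toSymbol).map (Sum.map f g) := by
  simp [Function.comp_def]

theorem yield_map (f : N → N') (g : T → T') (t : PTree N T) :
    (map f g t).yield = t.yield.map g := by
  induction t with
  | leaf t => simp
  | node A cs ih =>
    simp only [map_node, yield_node, List.flatMap_map, List.map_flatMap]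
    exact List.flatMap_congr ih

def mapRule (f : N → N') (g : T → T') : N × List (N ⊕ T) → N' × List (N' ⊕ T') :=
  Prod.map f (List.map (Sum.map f g))

theorem mapRule_injective {f : N → N'} {g : T → T'} (hf : f.Injective) (hg : g.Injective) :
    (mapRule f g).Injective :=
  hf.prodMap (List.map_injective_iff.2 (Sum.map_injective.2 ⟨hf, hg⟩))

theorem sign_map {σ : N × List (N ⊕ T) → ℤ} {σ' : N' × List (N' ⊕ T') → ℤ}
    {f : N → N'} {g : T → T'} (hσ : ∀ r, σ' (mapRule f g r) = σ r) (t : PTree N T) :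
    (map f g t).sign σ' = t.sign σ := by
  induction t with
  | leaf t => simp
  | node A cs ih =>
    rw [map_node, sign_node, sign_node, map_toSymbol_map, List.map_map (g := sign σ')]
    exact congr_arg₂ _ (hσ (A, cs.map toSymbol)) (congrArg _ (List.map_congr_left ih))

theorem valid_map {R : Set (N × List (N ⊕ T))} {R' : Set (N' × List (N' ⊕ T'))}
    {f : N → N'} {g : T → T'} (hR : Set.MapsTo (mapRule f g) R R') {t : PTree N T}
    (ht : Valid R t) : Valid R' (map f g t) := by
  induction t with
  | leaf t => rw [map_leaf]; exact Valid.leaf _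
  | node A cs ih =>
    cases ht with
    | node _ _ hr hcs =>
      rw [map_node]
      refine Valid.node _ _ (map_toSymbol_map f g cs ▸ hR hr) ?_
      simp only [List.mem_map, forall_exists_index, and_imp, forall_apply_eq_imp_iff₂]
      exact fun c hc => ih c hc (hcs c hc)

theorem map_injective {f : N → N'} {g : T → T'} (hf : f.Injective) (hg : g.Injective) :
    (map f g).Injective := by
  intro t₁
  induction t₁ with
  | leaf t =>
    rintro (t' | ⟨A', cs'⟩) h
    · simp only [map_leaf, leaf.injEq] at h; rw [hg h]
    · simp at h
  | node A cs ih =>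
    rintro (t' | ⟨A', cs'⟩) h
    · simp at h
    · simp only [map_node, node.injEq] at h
      rw [hf h.1, List.eq_of_map_eq_map ih h.2]

theorem exists_valid_map_eq {R : Set (N × List (N ⊕ T))} {R' : Set (N' × List (N' ⊕ T'))}
    {f : N → N'} {g : T → T'} (hf : f.Injective) (hg : g.Injective)
    (hR : ∀ A α', (f A, α') ∈ R' → (f A, α') ∈ mapRule f g '' R) {t : PTree N' T'}
    (ht : Valid R' t) (hroot : t.toSymbol ∈ Set.range (Sum.map f g)) :
    ∃ t₀, Valid R t₀ ∧ map f g t₀ = t := by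
  induction t with
  | leaf x =>
    obtain ⟨_ | y, hy⟩ := hroot
    · simp [toSymbol] at hy
    · exact ⟨leaf y, Valid.leaf y, by simpa [toSymbol] using hy⟩
  | node A' cs ih =>
    obtain ⟨A | _, hA⟩ := hroot
    · simp only [toSymbol, Sum.map_inl, Sum.inl.injEq] at hA
      subst hA
      cases ht with
      | node _ _ hr hcs =>
        obtain ⟨⟨B, β⟩, hβ, hBβ⟩ := hR A _ hr
        simp only [mapRule, Prod.map, Prod.mk.injEq] at hBβ
        have hchild : ∀ c ∈ cs, ∃ c₀, Valid R c₀ ∧ map f g c₀ = c := by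
          refine fun c hc => ih c hc (hcs c hc) ?_
          have : c.toSymbol ∈ β.map (Sum.map f g) := hBβ.2 ▸ List.mem_map_of_mem hc
          obtain ⟨s, -, hs⟩ := List.mem_map.1 this
          exact ⟨s, hs⟩
        obtain ⟨cs₀, hcs₀, rfl⟩ := List.exists_map_eq_of_forall_mem hchild
        have hβ₀ : cs₀.map toSymbol = β := by
          refine List.map_injective_iff.2 (Sum.map_injective.2 ⟨hf, hg⟩) ?_
          rw [← map_toSymbol_map, hBβ.2]
        exact ⟨node B cs₀, Valid.node B cs₀ (hβ₀ ▸ hβ) hcs₀, by rw [map_node, hBβ.1]⟩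
    · simp [toSymbol] at hA

theorem exists_valid_map_eq_of_toSymbol_eq {R : Set (N × List (N ⊕ T))}
    {R' : Set (N' × List (N' ⊕ T'))} {f : N → N'} {g : T → T'} (hf : f.Injective)
    (hg : g.Injective) (hR : ∀ A α', (f A, α') ∈ R' → (f A, α') ∈ mapRule f g '' R)
    {t : PTree N' T'} (ht : Valid R' t) {s : N ⊕ T} (hroot : t.toSymbol = Sum.map f g s) :
    ∃ t₀, Valid R t₀ ∧ t₀.toSymbol = s ∧ map f g t₀ = t := by
  obtain ⟨t₀, ht₀, rfl⟩ := exists_valid_map_eq hf hg hR ht ⟨s, hroot.symm⟩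
  refine ⟨t₀, ht₀, Sum.map_injective.2 ⟨hf, hg⟩ ?_, rfl⟩
  rw [← hroot, toSymbol_map]

def concat {N₁ N₂ T₁ T₂ : Type} (t₁ : PTree N₁ T₁) (t₂ : PTree N₂ T₂) :
    PTree (Option (N₁ ⊕ N₂)) (T₁ ⊕ T₂) :=
  node none [t₁.map (some ∘ Sum.inl) Sum.inl, t₂.map (some ∘ Sum.inr) Sum.inr]

theorem yield_concat {N₁ N₂ T₁ T₂ : Type} (t₁ : PTree N₁ T₁) (t₂ : PTree N₂ T₂) :
    (t₁.concat t₂).yield = t₁.yield.map Sum.inl ++ t₂.yield.map Sum.inr := by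
  simp [concat, yield_map]

theorem concat_injective {N₁ N₂ T₁ T₂ : Type} :
    Function.Injective fun p : PTree N₁ T₁ × PTree N₂ T₂ => p.1.concat p.2 := by
  rintro ⟨t₁, t₂⟩ ⟨t₁', t₂'⟩ h
  simp only [concat, node.injEq, List.cons.injEq, and_true, true_and] at h
  exact Prod.ext
    (map_injective (Option.some_injective _ |>.comp Sum.inl_injective) Sum.inl_injective h.1)
    (map_injective (Option.some_injective _ |>.comp Sum.inr_injective) Sum.inr_injective h.2)

end PTree

namespace SignedGrammar

variable {T₁ T₂ : Type} (G₁ : SignedGrammar T₁) (G₂ : SignedGrammar T₂)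

noncomputable def concatSign :
    Option (G₁.N ⊕ G₂.N) × List (Option (G₁.N ⊕ G₂.N) ⊕ (T₁ ⊕ T₂)) → ℤ :=
  Function.extend (PTree.mapRule (some ∘ .inl) .inl) G₁.sign
    (Function.extend (PTree.mapRule (some ∘ .inr) .inr) G₂.sign 1)

theorem concatSign_mapRule_inl (r : G₁.N × List (G₁.N ⊕ T₁)) :
    G₁.concatSign G₂ (PTree.mapRule (some ∘ .inl) .inl r) = G₁.sign r :=
  (PTree.mapRule_injective (Option.some_injective _ |>.comp Sum.inl_injective)
    Sum.inl_injective).extend_apply _ _ r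

theorem concatSign_mapRule_inr (r : G₂.N × List (G₂.N ⊕ T₂)) :
    G₁.concatSign G₂ (PTree.mapRule (some ∘ .inr) .inr r) = G₂.sign r := by
  obtain ⟨A, α⟩ := r
  rw [concatSign, Function.extend_apply' _ _ _ (by simp [PTree.mapRule])]
  exact (PTree.mapRule_injective (Option.some_injective _ |>.comp Sum.inr_injective)
    Sum.inr_injective).extend_apply _ _ (A, α)

theorem concatSign_none (α : List (Option (G₁.N ⊕ G₂.N) ⊕ (T₁ ⊕ T₂))) :
    G₁.concatSign G₂ (none, α) = 1 := by
  rw [concatSign, Function.extend_apply' _ _ _ (by simp [PTree.mapRule]),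
    Function.extend_apply' _ _ _ (by simp [PTree.mapRule]), Pi.one_apply]

-- Reducible, so that `simp` and `rw` see `(G₁.concat G₂).N` as `Option (G₁.N ⊕ G₂.N)`.
noncomputable abbrev concat : SignedGrammar (T₁ ⊕ T₂) where
  N := Option (G₁.N ⊕ G₂.N)
  finN := have := G₁.finN; have := G₂.finN; inferInstance
  start := none
  rules := insert (none, [.inl (some (.inl G₁.start)), .inl (some (.inr G₂.start))])
    (PTree.mapRule (some ∘ .inl) .inl '' G₁.rules ∪ PTree.mapRule (some ∘ .inr) .inr '' G₂.rules)
  finRules := ((G₁.finRules.image _).union (G₂.finRules.image _)).insert _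
  sign := G₁.concatSign G₂
  sign_valid := by
    rintro _ (rfl | ⟨r, hr, rfl⟩ | ⟨r, hr, rfl⟩)
    · exact .inl (concatSign_none G₁ G₂ _)
    · rw [concatSign_mapRule_inl]; exact G₁.sign_valid r hr
    · rw [concatSign_mapRule_inr]; exact G₂.sign_valid r hr

theorem sign_concat (t₁ : PTree G₁.N T₁) (t₂ : PTree G₂.N T₂) :
    (t₁.concat t₂).sign (G₁.concat G₂).sign = t₁.sign G₁.sign * t₂.sign G₂.sign := by
  rw [PTree.concat, PTree.sign_node]
  simp [concat, concatSign_none, PTree.sign_map (concatSign_mapRule_inl G₁ G₂),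
    PTree.sign_map (concatSign_mapRule_inr G₁ G₂)]

theorem mem_concat_rules_none {α : List ((G₁.concat G₂).N ⊕ (T₁ ⊕ T₂))}
    (h : (none, α) ∈ (G₁.concat G₂).rules) :
    α = [.inl (some (.inl G₁.start)), .inl (some (.inr G₂.start))] := by
  simpa [concat, PTree.mapRule] using h

theorem mem_concat_rules_inl {A : G₁.N} {α : List ((G₁.concat G₂).N ⊕ (T₁ ⊕ T₂))}
    (h : (some (.inl A), α) ∈ (G₁.concat G₂).rules) :
    (some (.inl A), α) ∈ PTree.mapRule (some ∘ .inl) .inl '' G₁.rules := by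
  simpa [concat, PTree.mapRule] using h

theorem mem_concat_rules_inr {A : G₂.N} {α : List ((G₁.concat G₂).N ⊕ (T₁ ⊕ T₂))}
    (h : (some (.inr A), α) ∈ (G₁.concat G₂).rules) :
    (some (.inr A), α) ∈ PTree.mapRule (some ∘ .inr) .inr '' G₂.rules := by
  simpa [concat, PTree.mapRule] using h

theorem isParseTree_concat_iff {t : PTree (G₁.concat G₂).N (T₁ ⊕ T₂)} :
    (G₁.concat G₂).IsParseTree t ↔
      ∃ t₁ t₂, G₁.IsParseTree t₁ ∧ G₂.IsParseTree t₂ ∧ t₁.concat t₂ = t := by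
  have hinl : (some ∘ Sum.inl : G₁.N → (G₁.concat G₂).N).Injective :=
    Option.some_injective _ |>.comp Sum.inl_injective
  have hinr : (some ∘ Sum.inr : G₂.N → (G₁.concat G₂).N).Injective :=
    Option.some_injective _ |>.comp Sum.inr_injective
  constructor
  · rintro ⟨ht, hroot⟩
    cases ht with
    | leaf x => simp [PTree.toSymbol] at hroot
    | node A cs hr hcs =>
      obtain rfl : A = none := by simpa [PTree.toSymbol] using hroot
      have hsym := mem_concat_rules_none G₁ G₂ hr
      simp only [List.map_eq_cons_iff, List.map_eq_nil_iff] at hsym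
      obtain ⟨c₁, _, rfl, hc₁, c₂, _, rfl, hc₂, rfl⟩ := hsym
      obtain ⟨t₁, ht₁, hroot₁, rfl⟩ := PTree.exists_valid_map_eq_of_toSymbol_eq hinl
        Sum.inl_injective (fun _ _ => mem_concat_rules_inl G₁ G₂) (hcs c₁ (by simp))
        (s := .inl G₁.start) hc₁
      obtain ⟨t₂, ht₂, hroot₂, rfl⟩ := PTree.exists_valid_map_eq_of_toSymbol_eq hinr
        Sum.inr_injective (fun _ _ => mem_concat_rules_inr G₁ G₂) (hcs c₂ (by simp))
        (s := .inl G₂.start) hc₂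
      exact ⟨t₁, t₂, ⟨ht₁, hroot₁⟩, ⟨ht₂, hroot₂⟩, rfl⟩
  · rintro ⟨t₁, t₂, ⟨ht₁, hroot₁⟩, ⟨ht₂, hroot₂⟩, rfl⟩
    refine ⟨.node _ _ ?_ ?_, rfl⟩
    · simp only [List.map_cons, List.map_nil, PTree.toSymbol_map, hroot₁, hroot₂]
      exact Set.mem_insert _ _
    · simp only [List.mem_cons, List.not_mem_nil, or_false]
      rintro c (rfl | rfl)
      · exact PTree.valid_map (fun r hr => .inr (.inl ⟨r, hr, rfl⟩)) ht₁
      · exact PTree.valid_map (fun r hr => .inr (.inr ⟨r, hr, rfl⟩)) ht₂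

theorem parseTreesOf_concat_append (u : List T₁) (v : List T₂) :
    (G₁.concat G₂).parseTreesOf (u.map .inl ++ v.map .inr) =
      (fun p => p.1.concat p.2) '' (G₁.parseTreesOf u ×ˢ G₂.parseTreesOf v) := by
  ext t
  simp only [parseTreesOf, Set.mem_ofPred_eq, isParseTree_concat_iff, Set.mem_image, Set.mem_prod,
    Prod.exists]
  constructor
  · rintro ⟨⟨t₁, t₂, ht₁, ht₂, rfl⟩, hw⟩
    rw [PTree.yield_concat, List.map_inl_append_map_inr_inj] at hw
    exact ⟨t₁, t₂, ⟨⟨ht₁, hw.1⟩, ⟨ht₂, hw.2⟩⟩, rfl⟩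
  · rintro ⟨t₁, t₂, ⟨⟨ht₁, rfl⟩, ⟨ht₂, rfl⟩⟩, rfl⟩
    exact ⟨⟨t₁, t₂, ht₁, ht₂, rfl⟩, PTree.yield_concat t₁ t₂⟩

theorem parseTreesOf_concat_eq_empty {w : List (T₁ ⊕ T₂)}
    (hw : ∀ (u : List T₁) (v : List T₂), w ≠ u.map .inl ++ v.map .inr) :
    (G₁.concat G₂).parseTreesOf w = ∅ := by
  refine Set.eq_empty_of_forall_notMem fun t ⟨ht, hyield⟩ => ?_
  obtain ⟨t₁, t₂, -, -, rfl⟩ := (isParseTree_concat_iff G₁ G₂).1 ht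
  exact hw _ _ (hyield ▸ PTree.yield_concat t₁ t₂)

variable {G₁ G₂}

theorem Admissible.concat (h₁ : G₁.Admissible) (h₂ : G₂.Admissible) :
    (G₁.concat G₂).Admissible := by
  intro w
  by_cases hw : ∃ (u : List T₁) (v : List T₂), w = u.map .inl ++ v.map .inr
  · obtain ⟨u, v, rfl⟩ := hw
    rw [parseTreesOf_concat_append]
    exact ((h₁ u).prod (h₂ v)).image _
  · push Not at hw
    rw [parseTreesOf_concat_eq_empty G₁ G₂ hw]
    exact Set.finite_empty

theorem count_concat_append (h₁ : G₁.Admissible) (h₂ : G₂.Admissible) (u : List T₁)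
    (v : List T₂) :
    (G₁.concat G₂).count (u.map .inl ++ v.map .inr) = G₁.count u * G₂.count v := by
  rw [count, parseTreesOf_concat_append, finsum_mem_image PTree.concat_injective.injOn,
    count, count, finsum_mem_mul_finsum_mem (h₁ u) (h₂ v)]
  exact finsum_mem_congr rfl fun p _ => sign_concat G₁ G₂ p.1 p.2

theorem count_concat_eq_zero {w : List (T₁ ⊕ T₂)}
    (hw : ∀ (u : List T₁) (v : List T₂), w ≠ u.map .inl ++ v.map .inr) :
    (G₁.concat G₂).count w = 0 := by
  rw [count, parseTreesOf_concat_eq_empty G₁ G₂ hw, finsum_mem_empty]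

end SignedGrammar

theorem signed_grammar_closed_under_disjoint_concatenation_general
    (T₁ T₂ : Type)
    (L₁ : Language T₁) (L₂ : Language T₂)
    (G₁ : SignedGrammar T₁) (G₂ : SignedGrammar T₂)
    (h₁ : G₁.Generates L₁) (h₂ : G₂.Generates L₂) :
    ∃ G : SignedGrammar (T₁ ⊕ T₂),
      G.Generates {w : List (T₁ ⊕ T₂) |
        ∃ u ∈ L₁, ∃ v ∈ L₂, w = u.map Sum.inl ++ v.map Sum.inr} := by
  obtain ⟨adm₁, mem₁, notMem₁⟩ := h₁
  obtain ⟨adm₂, mem₂, notMem₂⟩ := h₂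
  refine ⟨G₁.concat G₂, adm₁.concat adm₂, ?_, fun w hw => ?_⟩
  · rintro _ ⟨u, hu, v, hv, rfl⟩
    rw [SignedGrammar.count_concat_append adm₁ adm₂, mem₁ u hu, mem₂ v hv, mul_one]
  by_cases hsplit : ∃ (u : List T₁) (v : List T₂), w = u.map .inl ++ v.map .inr
  · obtain ⟨u, v, rfl⟩ := hsplit
    rw [SignedGrammar.count_concat_append adm₁ adm₂]
    by_cases hu : u ∈ L₁
    · rw [notMem₂ v fun hv => hw ⟨u, hu, v, hv, rfl⟩, mul_zero]
    · rw [notMem₁ u hu, zero_mul]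
  · push Not at hsplit
    exact SignedGrammar.count_concat_eq_zero hsplit

/-- Languages generated by admissible signed grammars are closed under concatenation
of languages over disjoint alphabets (the disjoint union of the alphabets being
modeled by the sum type `T₁ ⊕ T₂`). -/
theorem signed_grammar_closed_under_disjoint_concatenation
    (T₁ T₂ : Type) [Fintype T₁] [Fintype T₂]
    (L₁ : Language T₁) (L₂ : Language T₂)
    (G₁ : SignedGrammar T₁) (G₂ : SignedGrammar T₂)
    (h₁ : G₁.Generates L₁) (h₂ : G₂.Generates L₂) :
    ∃ G : SignedGrammar (T₁ ⊕ T₂),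
      G.Generates {w : List (T₁ ⊕ T₂) |
        ∃ u ∈ L₁, ∃ v ∈ L₂, w = u.map Sum.inl ++ v.map Sum.inr} :=
  signed_grammar_closed_under_disjoint_concatenation_general T₁ T₂ L₁ L₂ G₁ G₂ h₁ h₂
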